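/- Let m and n be integers with n ≥ 2 and m − n ≥ 4 such that m and n have the same parity (so m − n is even). Then for every i with 1 ≤ i ≤ m−1, the graph distance in M_{m,n} satisfies: d(v_{m−1,1}, v_{i,1}) = i + n − 1 if 1 ≤ i ≤ (m−n)/2, and d(v_{m−1,1}, v_{i,1}) = m − 1 − i if (m−n+2)/2 ≤ i ≤ m−1. -/
import Mathlib


/-- The relation generating the edges of the generalized Möbius ladder `M_{m,n}`:
horizontal edges `{(i,j),(i+1,j)}`, vertical edges `{(i,j),(i,j+1)}`, and the
twisted edges `{(m-1,j),(1,n+1-j)}`. -/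
def gmlRel (m n : ℕ) (u v : ℕ × ℕ) : Prop :=
  (u.2 = v.2 ∧ v.1 = u.1 + 1) ∨
  (u.1 = v.1 ∧ v.2 = u.2 + 1) ∨
  (u.1 = m - 1 ∧ v.1 = 1 ∧ u.2 + v.2 = n + 1)

/-- The vertex set `{(i,j) : 1 ≤ i ≤ m-1, 1 ≤ j ≤ n}` of `M_{m,n}`. -/
abbrev GMLVert (m n : ℕ) : Type :=
  {p : ℕ × ℕ // 1 ≤ p.1 ∧ p.1 ≤ m - 1 ∧ 1 ≤ p.2 ∧ p.2 ≤ n}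

/-- The generalized Möbius ladder `M_{m,n}` as a simple graph. -/
def GML (m n : ℕ) : SimpleGraph (GMLVert m n) :=
  SimpleGraph.fromRel (fun u v => gmlRel m n u.val v.val)

/-- `W` is a resolving set of `M_{m,n}`: distinct vertices have distinct
tuples of distances to the elements of `W`. -/
def IsResolving (m n : ℕ) (W : Set (GMLVert m n)) : Prop :=
  ∀ u v : GMLVert m n,
    (∀ w ∈ W, (GML m n).dist u w = (GML m n).dist v w) → u = v

/-- The metric dimension of `M_{m,n}`: the minimum cardinality of a resolving set. -/
noncomputable def metricDim (m n : ℕ) : ℕ :=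
  sInf {k : ℕ | ∃ W : Finset (GMLVert m n), W.card = k ∧ IsResolving m n ↑W}

lemma gml_adj_of_rel {m n : ℕ} (u v : GMLVert m n) (hne : u.val ≠ v.val)
    (h : gmlRel m n u.val v.val) : (GML m n).Adj u v := by
  rw [GML, SimpleGraph.fromRel_adj]
  exact ⟨fun he => hne (congrArg Subtype.val he), Or.inl h⟩

/-- horizontal walks -/
lemma gml_horiz {m n : ℕ} : ∀ k (u v : GMLVert m n), v.val.1 = u.val.1 + k →
    v.val.2 = u.val.2 → ∃ p : (GML m n).Walk u v, p.length ≤ k := by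
  intro k
  induction k with
  | zero =>
    intro u v h1 h2
    have : u = v := Subtype.ext (Prod.ext (by omega) h2.symm)
    subst this
    exact ⟨SimpleGraph.Walk.nil, by simp⟩
  | succ k ih =>
    intro u v h1 h2
    obtain ⟨hu1, hu2, hu3, hu4⟩ := u.2
    obtain ⟨hv1, hv2, hv3, hv4⟩ := v.2
    have hw : 1 ≤ u.val.1 + 1 ∧ u.val.1 + 1 ≤ m - 1 ∧ 1 ≤ u.val.2 ∧ u.val.2 ≤ n := by omega
    set w : GMLVert m n := ⟨(u.val.1 + 1, u.val.2), hw⟩ with hwdef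
    have hadj : (GML m n).Adj u w := by
      apply gml_adj_of_rel
      · intro h; apply_fun Prod.fst at h; simp [hwdef] at h
      · exact Or.inl ⟨rfl, rfl⟩
    obtain ⟨p, hp⟩ := ih w v (by simp [hwdef]; omega) (by simp [hwdef]; omega)
    exact ⟨SimpleGraph.Walk.cons hadj p, by simp; omega⟩

/-- vertical walks -/
lemma gml_vert {m n : ℕ} : ∀ k (u v : GMLVert m n), v.val.2 = u.val.2 + k →
    v.val.1 = u.val.1 → ∃ p : (GML m n).Walk u v, p.length ≤ k := by
  intro k
  induction k with
  | zero =>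
    intro u v h1 h2
    have : u = v := Subtype.ext (Prod.ext h2.symm (by omega))
    subst this
    exact ⟨SimpleGraph.Walk.nil, by simp⟩
  | succ k ih =>
    intro u v h1 h2
    obtain ⟨hu1, hu2, hu3, hu4⟩ := u.2
    obtain ⟨hv1, hv2, hv3, hv4⟩ := v.2
    have hw : 1 ≤ u.val.1 ∧ u.val.1 ≤ m - 1 ∧ 1 ≤ u.val.2 + 1 ∧ u.val.2 + 1 ≤ n := by omega
    set w : GMLVert m n := ⟨(u.val.1, u.val.2 + 1), hw⟩ with hwdef
    have hadj : (GML m n).Adj u w := by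
      apply gml_adj_of_rel
      · intro h; apply_fun Prod.snd at h; simp [hwdef] at h
      · exact Or.inr (Or.inl ⟨rfl, rfl⟩)
    obtain ⟨p, hp⟩ := ih w v (by simp [hwdef]; omega) (by simp [hwdef]; omega)
    exact ⟨SimpleGraph.Walk.cons hadj p, by simp; omega⟩

/-- the potential function -/
def gmlF (m n : ℕ) (p : GMLVert m n) : ℕ :=
  min (m - p.val.1 + p.val.2 - 2) (p.val.1 + n - p.val.2)

lemma gmlF_lip {m n : ℕ} (hn : 2 ≤ n) (hm : n + 4 ≤ m) (u v : GMLVert m n)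
    (h : (GML m n).Adj u v) : gmlF m n v ≤ gmlF m n u + 1 := by
  rw [GML, SimpleGraph.fromRel_adj] at h
  obtain ⟨hu1, hu2, hu3, hu4⟩ := u.2
  obtain ⟨hv1, hv2, hv3, hv4⟩ := v.2
  obtain ⟨hne, h | h⟩ := h <;>
    · unfold gmlF
      rcases h with ⟨h1, h2⟩ | ⟨h1, h2⟩ | ⟨h1, h2, h3⟩ <;> omega

lemma gmlF_walk {m n : ℕ} (hn : 2 ≤ n) (hm : n + 4 ≤ m) :
    ∀ (u v : GMLVert m n) (p : (GML m n).Walk u v), gmlF m n v ≤ gmlF m n u + p.length := by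
  intro u v p
  induction p with
  | nil => simp
  | cons h p ih =>
    have := gmlF_lip hn hm _ _ h
    simp only [SimpleGraph.Walk.length_cons]
    omega

theorem stmt14 (m n : ℕ) (hn : 2 ≤ n) (hm : n + 4 ≤ m) (hpar : Even (m + n))
    (i : ℕ) (hi1 : 1 ≤ i) (hi2 : i ≤ m - 1) :
    (i ≤ (m - n) / 2 →
      (GML m n).dist ⟨(m - 1, 1), by omega⟩ ⟨(i, 1), by omega⟩ = i + n - 1) ∧
    ((m - n + 2) / 2 ≤ i →
      (GML m n).dist ⟨(m - 1, 1), by omega⟩ ⟨(i, 1), by omega⟩ = m - 1 - i) := by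
  obtain ⟨c, hc⟩ := hpar
  have hFs : gmlF m n (⟨(m - 1, 1), by omega⟩ : GMLVert m n) = 0 := by
    simp [gmlF]; omega
  have lower : ∀ p : (GML m n).Walk (⟨(m - 1, 1), by omega⟩ : GMLVert m n)
      (⟨(i, 1), by omega⟩ : GMLVert m n),
      gmlF m n (⟨(i, 1), by omega⟩ : GMLVert m n) ≤ p.length := by
    intro p
    have := gmlF_walk hn hm _ _ p
    omega
  constructor
  · -- case 1 : i ≤ (m-n)/2, dist = i + n - 1
    intro hile
    have hFt : gmlF m n (⟨(i, 1), by omega⟩ : GMLVert m n) = i + n - 1 := by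
      simp [gmlF]; omega
    have htw : (GML m n).Adj (⟨(m - 1, 1), by omega⟩ : GMLVert m n) ⟨(1, n), by omega⟩ := by
      apply gml_adj_of_rel
      · intro h; apply_fun Prod.fst at h; simp at h; omega
      · exact Or.inr (Or.inr ⟨rfl, rfl, by simp; omega⟩)
    obtain ⟨p1, hp1⟩ := gml_vert (m := m) (n := n) (n - 1) ⟨(1, 1), by omega⟩
      ⟨(1, n), by omega⟩ (by simp; omega) rfl
    obtain ⟨p2, hp2⟩ := gml_horiz (m := m) (n := n) (i - 1) ⟨(1, 1), by omega⟩
      ⟨(i, 1), by omega⟩ (by simp; omega) (by simp)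
    obtain ⟨p, hp⟩ : ∃ p : (GML m n).Walk (⟨(m - 1, 1), by omega⟩ : GMLVert m n)
        (⟨(i, 1), by omega⟩ : GMLVert m n), p.length ≤ i + n - 1 := by
      refine ⟨SimpleGraph.Walk.cons htw (p1.reverse.append p2), ?_⟩
      simp
      omega
    have h1 := SimpleGraph.dist_le p
    obtain ⟨q, hq⟩ := (p.reachable).exists_walk_length_eq_dist
    have h3 := lower q
    omega
  · -- case 2 : dist = m - 1 - i
    intro hige
    have hFt : gmlF m n (⟨(i, 1), by omega⟩ : GMLVert m n) = m - 1 - i := by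
      simp [gmlF]; omega
    obtain ⟨p0, hp0⟩ := gml_horiz (m := m) (n := n) (m - 1 - i) ⟨(i, 1), by omega⟩
      ⟨(m - 1, 1), by omega⟩ (by simp; omega) (by simp)
    have h1 := SimpleGraph.dist_le p0.reverse
    have h1' : p0.reverse.length = p0.length := SimpleGraph.Walk.length_reverse _
    obtain ⟨q, hq⟩ := (p0.reverse.reachable).exists_walk_length_eq_dist
    have h3 := lower q
    omega
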